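/- (Entry of the Gr(3,7) twist table: T*(X^{123456}) = Δ₁₆₇Δ₂₃₄Δ₄₅₆Δ₃₅₇.) For all vectors v₁,…,v₇ ∈ ℝ³, set w_i := v_{i+1}×v_{i+2} with indices taken modulo 7 in {1,…,7}, and write Δ_{abc} := det(v_a,v_b,v_c). Then det(w₁×w₂, w₃×w₄, w₅×w₆) = Δ₁₆₇·Δ₂₃₄·Δ₄₅₆·Δ₃₅₇. -/

import Mathlib

/-!
Adjacent columns of the twist share a vector, and `(a × b) × (b × c) = det(a, b, c) b`
(the vector triple product expansion, one term of which vanishes). Hence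
`w₁ × w₂ = Δ₂₃₄ v₃`, `w₃ × w₄ = Δ₄₅₆ v₅`, `w₅ × w₆ = Δ₆₇₁ v₇`, and multilinearity of the
determinant gives the product `Δ₂₃₄ Δ₄₅₆ Δ₆₇₁ Δ₃₅₇`.
-/

/-- Determinant of the 3×3 real matrix with columns `a`, `b`, `c`. -/
noncomputable def det3 (a b c : Fin 3 → ℝ) : ℝ :=
  (Matrix.of ![a, b, c]).transpose.det

/-- The standard cross product on `ℝ³`. -/
def cross (a b : Fin 3 → ℝ) : Fin 3 → ℝ := crossProduct a b

open Matrix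

lemma det3_eq_dotProduct_cross (a b c : Fin 3 → ℝ) : det3 a b c = a ⬝ᵥ cross b c := by
  rw [det3, det_transpose, cross, triple_product_eq_det]
  rfl

lemma det3_rotate (a b c : Fin 3 → ℝ) : det3 b c a = det3 a b c := by
  simp only [det3_eq_dotProduct_cross, cross, triple_product_permutation a b c]

lemma det3_smul (k l m : ℝ) (a b c : Fin 3 → ℝ) :
    det3 (k • a) (l • b) (m • c) = k * l * m * det3 a b c := by
  simp only [det3_eq_dotProduct_cross, cross, map_smul, LinearMap.smul_apply, smul_dotProduct,
    dotProduct_smul, smul_eq_mul]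
  ring

lemma cross_cross_cross_eq_det3_smul (a b c : Fin 3 → ℝ) :
    cross (cross a b) (cross b c) = det3 a b c • b := by
  rw [cross, cross, cross, cross_cross_eq_smul_sub_smul, dot_self_cross, zero_smul, sub_zero,
    det3_eq_dotProduct_cross, cross]

theorem twist_X123456_general (v₁ v₂ v₃ v₄ v₅ v₆ v₇ w₁ w₂ w₃ w₄ w₅ w₆ : Fin 3 → ℝ)
    (hw₁ : w₁ = cross v₂ v₃) (hw₂ : w₂ = cross v₃ v₄) (hw₃ : w₃ = cross v₄ v₅)
    (hw₄ : w₄ = cross v₅ v₆) (hw₅ : w₅ = cross v₆ v₇) (hw₆ : w₆ = cross v₇ v₁) :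
    det3 (cross w₁ w₂) (cross w₃ w₄) (cross w₅ w₆)
      = det3 v₁ v₆ v₇ * det3 v₂ v₃ v₄ * det3 v₄ v₅ v₆ * det3 v₃ v₅ v₇ := by
  subst hw₁ hw₂ hw₃ hw₄ hw₅ hw₆
  rw [cross_cross_cross_eq_det3_smul, cross_cross_cross_eq_det3_smul, cross_cross_cross_eq_det3_smul,
    det3_smul, det3_rotate v₁ v₆ v₇]
  ring

/-- Gr(3,7) twist table entry: `T*(X^{123456}) = Δ₁₆₇Δ₂₃₄Δ₄₅₆Δ₃₅₇`. -/
theorem twist_X123456 (v₁ v₂ v₃ v₄ v₅ v₆ v₇ w₁ w₂ w₃ w₄ w₅ w₆ w₇ : Fin 3 → ℝ)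
    (hw₁ : w₁ = cross v₂ v₃) (hw₂ : w₂ = cross v₃ v₄) (hw₃ : w₃ = cross v₄ v₅)
    (hw₄ : w₄ = cross v₅ v₆) (hw₅ : w₅ = cross v₆ v₇) (hw₆ : w₆ = cross v₇ v₁)
    (hw₇ : w₇ = cross v₁ v₂) :
    det3 (cross w₁ w₂) (cross w₃ w₄) (cross w₅ w₆)
      = det3 v₁ v₆ v₇ * det3 v₂ v₃ v₄ * det3 v₄ v₅ v₆ * det3 v₃ v₅ v₇ :=
  twist_X123456_general v₁ v₂ v₃ v₄ v₅ v₆ v₇ w₁ w₂ w₃ w₄ w₅ w₆ hw₁ hw₂ hw₃ hw₄ hw₅ hw₆
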